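/- Let K ≥ 1, let A₁, B₁ be positive definite matrices, and A_k, B_k for 2 ≤ k ≤ K positive semidefinite matrices. Then Tr( Σ_{k=1}^K (A_k − B_k) [ (Σ_{ℓ=1}^k B_ℓ)⁻¹ − (Σ_{ℓ=1}^k A_ℓ)⁻¹ ] ) ≥ 0. -/

import Mathlib

/-!
Let `X_k`, `Y_k` be the partial sums, `D_k = X_k - Y_k`, and let `t_k` be the `k`-th summand
`Tr((A_k - B_k)(Y_k⁻¹ - X_k⁻¹))`. The potential `Φ_k = Tr(D_k Y_k⁻¹ D_k X_k⁻¹)` is nonnegative,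
being the trace of the product of the positive semidefinite matrices `D_k Y_k⁻¹ D_k` and `X_k⁻¹`,
and `Φ_1 = t_1`. With `E = A_{k+1} - B_{k+1} = D_{k+1} - D_k` and
`Y⁻¹ - X⁻¹ = Y⁻¹ (X - Y) X⁻¹ = X⁻¹ (X - Y) Y⁻¹`, expanding gives
`Φ_{k+1} + Tr(E Y_{k+1}⁻¹ E X_{k+1}⁻¹) = Tr(D_k Y_{k+1}⁻¹ D_k X_{k+1}⁻¹) + 2 t_{k+1}`.
The second term on the left is nonnegative, and since inversion is operator antitone the first
term on the right is at most `Φ_k`. Hence `Φ_{k+1} ≤ Φ_k + 2 t_{k+1}`, and `0 ≤ Φ_K ≤ 2 ∑ t_k`.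
-/

open Matrix ComplexOrder
open scoped MatrixOrder

namespace Matrix

variable {ι 𝕜 : Type*} [RCLike 𝕜]

lemma posDef_sum_Icc {A : ℕ → Matrix ι ι 𝕜} {m : ℕ} (hm : 1 ≤ m)
    (hA1 : (A 1).PosDef) (hA : ∀ k, 2 ≤ k → k ≤ m → (A k).PosSemidef) :
    (∑ l ∈ Finset.Icc 1 m, A l).PosDef := by
  rw [Finset.Icc_eq_cons_Ioc hm, Finset.sum_cons]
  refine hA1.add_posSemidef (posSemidef_sum _ fun k hk => ?_)
  rw [Finset.mem_Ioc] at hk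
  exact hA k hk.1 hk.2

variable [Fintype ι]

lemma trace_mul_mul_mul_add_trace_sub {R : Type*} [CommRing R] (D D' P Q : Matrix ι ι R) :
    (D' * P * D' * Q).trace + ((D' - D) * P * (D' - D) * Q).trace =
      (D * P * D * Q).trace + ((D' - D) * (P * D' * Q + Q * D' * P)).trace := by
  have h₁ : (D' * (Q * (D' * P))).trace = (D' * (P * (D' * Q))).trace := by
    simpa only [Matrix.mul_assoc] using trace_mul_comm (D' * Q) (D' * P)
  have h₂ : (D * (Q * (D' * P))).trace = (D' * (P * (D * Q))).trace := by
    simpa only [Matrix.mul_assoc] using trace_mul_comm (D * Q) (D' * P)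
  simp only [Matrix.mul_sub, Matrix.sub_mul, Matrix.mul_add, trace_add, trace_sub,
    Matrix.mul_assoc, h₁, h₂]
  ring

lemma trace_mul_nonneg {P Q : Matrix ι ι 𝕜} (hP : P.PosSemidef) (hQ : Q.PosSemidef) :
    0 ≤ (P * Q).trace := by
  classical
  obtain ⟨B, rfl⟩ := CStarAlgebra.nonneg_iff_eq_star_mul_self.mp hQ.nonneg
  rw [star_eq_conjTranspose, ← Matrix.mul_assoc, trace_mul_comm]
  simpa only [Matrix.mul_assoc] using (hP.mul_mul_conjTranspose_same B).trace_nonneg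

lemma trace_mul_mul_mul_nonneg {E P Q : Matrix ι ι 𝕜} (hE : E.IsHermitian)
    (hP : P.PosSemidef) (hQ : Q.PosSemidef) : 0 ≤ (E * P * E * Q).trace := by
  simpa only [hE.eq] using trace_mul_nonneg (hP.conjTranspose_mul_mul_same E) hQ

lemma trace_mul_mul_mul_le_trace_mul_mul_mul {E P P' Q Q' : Matrix ι ι 𝕜} (hE : E.IsHermitian)
    (hP' : P'.PosSemidef) (hQ : Q.PosSemidef) (hPP' : P' ≤ P) (hQQ' : Q' ≤ Q) :
    (E * P' * E * Q').trace ≤ (E * P * E * Q).trace := by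
  have h₁ := trace_mul_mul_mul_nonneg hE hPP' hQ
  have h₂ := trace_mul_mul_mul_nonneg hE hP' hQQ'
  simp only [Matrix.mul_sub, Matrix.sub_mul, trace_sub] at h₁ h₂
  linear_combination h₁ + h₂

variable [DecidableEq ι]

noncomputable def tracePotential (X Y : Matrix ι ι 𝕜) : 𝕜 :=
  ((X - Y) * Y⁻¹ * (X - Y) * X⁻¹).trace

lemma tracePotential_nonneg {X Y : Matrix ι ι 𝕜} (hX : X.PosSemidef) (hY : Y.PosSemidef) :
    0 ≤ tracePotential X Y :=
  trace_mul_mul_mul_nonneg (hX.isHermitian.sub hY.isHermitian) hY.inv hX.inv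

lemma tracePotential_eq_trace_mul_inv_sub_inv {X Y : Matrix ι ι 𝕜} (h : IsUnit Y ↔ IsUnit X) :
    tracePotential X Y = ((X - Y) * (Y⁻¹ - X⁻¹)).trace := by
  rw [tracePotential, inv_sub_inv h, Matrix.mul_assoc, Matrix.mul_assoc, Matrix.mul_assoc]

lemma inv_le_inv_of_le {M N : Matrix ι ι ℂ} (hM : M.PosDef) (hMN : M ≤ N) : N⁻¹ ≤ M⁻¹ := by
  open scoped Matrix.Norms.L2Operator in
  simpa only [nonsing_inv_eq_ringInverse] using
    CStarAlgebra.ringInverse_le_ringInverse hMN hM.isStrictlyPositive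

lemma tracePotential_add_le {X Y A B : Matrix ι ι ℂ} (hX : X.PosDef) (hY : Y.PosDef)
    (hA : A.PosSemidef) (hB : B.PosSemidef) :
    tracePotential (X + A) (Y + B) ≤
      tracePotential X Y + 2 * ((A - B) * ((Y + B)⁻¹ - (X + A)⁻¹)).trace := by
  have hXA := hX.add_posSemidef hA
  have hYB := hY.add_posSemidef hB
  have hunit : IsUnit (Y + B) ↔ IsUnit (X + A) := iff_of_true hYB.isUnit hXA.isUnit
  have hinv₁ := inv_sub_inv hunit
  have hinv₂ : (Y + B)⁻¹ - (X + A)⁻¹ = (X + A)⁻¹ * (X + A - (Y + B)) * (Y + B)⁻¹ := by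
    rw [← neg_sub, inv_sub_inv hunit.symm, ← neg_sub (Y + B), Matrix.mul_neg, Matrix.neg_mul]
  have hcross : ((A - B) * ((Y + B)⁻¹ * (X + A - (Y + B)) * (X + A)⁻¹ +
      (X + A)⁻¹ * (X + A - (Y + B)) * (Y + B)⁻¹)).trace =
      2 * ((A - B) * ((Y + B)⁻¹ - (X + A)⁻¹)).trace := by
    rw [← hinv₁, ← hinv₂, Matrix.mul_add, trace_add, two_mul]
  have hAB : X + A - (Y + B) - (X - Y) = A - B := by abel
  have hsplit := trace_mul_mul_mul_add_trace_sub (X - Y) (X + A - (Y + B)) (Y + B)⁻¹ (X + A)⁻¹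
  rw [hAB, hcross] at hsplit
  have hstep : 0 ≤ ((A - B) * (Y + B)⁻¹ * (A - B) * (X + A)⁻¹).trace :=
    trace_mul_mul_mul_nonneg (hA.isHermitian.sub hB.isHermitian) hYB.inv.posSemidef
      hXA.inv.posSemidef
  have hmono : ((X - Y) * (Y + B)⁻¹ * (X - Y) * (X + A)⁻¹).trace ≤ tracePotential X Y :=
    trace_mul_mul_mul_le_trace_mul_mul_mul (hX.isHermitian.sub hY.isHermitian)
      hYB.inv.posSemidef hX.inv.posSemidef
      (inv_le_inv_of_le hY (le_add_of_nonneg_right hB.nonneg))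
      (inv_le_inv_of_le hX (le_add_of_nonneg_right hA.nonneg))
  unfold tracePotential at hmono ⊢
  linear_combination hsplit + hstep + hmono

lemma tracePotential_sum_Icc_le {A B : ℕ → Matrix ι ι ℂ} {m : ℕ} (hm : 1 ≤ m)
    (hA1 : (A 1).PosDef) (hB1 : (B 1).PosDef)
    (hA : ∀ k, 2 ≤ k → k ≤ m → (A k).PosSemidef)
    (hB : ∀ k, 2 ≤ k → k ≤ m → (B k).PosSemidef) :
    tracePotential (∑ l ∈ Finset.Icc 1 m, A l) (∑ l ∈ Finset.Icc 1 m, B l) ≤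
      2 * ∑ k ∈ Finset.Icc 1 m, ((A k - B k) *
        ((∑ l ∈ Finset.Icc 1 k, B l)⁻¹ - (∑ l ∈ Finset.Icc 1 k, A l)⁻¹)).trace := by
  induction m, hm using Nat.le_induction with
  | base =>
    have hpot := tracePotential_eq_trace_mul_inv_sub_inv (iff_of_true hB1.isUnit hA1.isUnit)
    simp only [Finset.Icc_self, Finset.sum_singleton, hpot, two_mul]
    exact le_add_of_nonneg_left (hpot ▸ tracePotential_nonneg hA1.posSemidef hB1.posSemidef)
  | succ m hm ih =>
    have hA' k (hk : 2 ≤ k) (hkm : k ≤ m) := hA k hk (hkm.trans m.le_succ)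
    have hB' k (hk : 2 ≤ k) (hkm : k ≤ m) := hB k hk (hkm.trans m.le_succ)
    simp only [Finset.sum_Icc_succ_top (Nat.le_add_left 1 m), mul_add]
    exact (tracePotential_add_le (posDef_sum_Icc hm hA1 hA') (posDef_sum_Icc hm hB1 hB')
      (hA (m + 1) (by omega) le_rfl) (hB (m + 1) (by omega) le_rfl)).trans
      (add_le_add_left (ih hA' hB') _)

end Matrix

theorem trace_inequality_general (n : ℕ) (K : ℕ) (hK : 1 ≤ K)
    (A B : ℕ → Matrix (Fin n) (Fin n) ℂ)
    (hA1 : (A 1).PosDef) (hB1 : (B 1).PosDef)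
    (hA : ∀ k, 2 ≤ k → k ≤ K → (A k).PosSemidef)
    (hB : ∀ k, 2 ≤ k → k ≤ K → (B k).PosSemidef) :
    0 ≤ Matrix.trace (∑ k ∈ Finset.Icc 1 K, (A k - B k) *
      ((∑ l ∈ Finset.Icc 1 k, B l)⁻¹ - (∑ l ∈ Finset.Icc 1 k, A l)⁻¹)) := by
  have hpot := (tracePotential_nonneg (posDef_sum_Icc hK hA1 hA).posSemidef
    (posDef_sum_Icc hK hB1 hB).posSemidef).trans (tracePotential_sum_Icc_le hK hA1 hB1 hA hB)
  rw [trace_sum]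
  simpa using mul_nonneg (by positivity : (0 : ℂ) ≤ 2⁻¹) hpot
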